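/- Let G be the group presented by ⟨a, s, t | a² = 1, [a, t⁻¹at] = 1, [s,t] = 1, s⁻¹as = a·(t⁻¹at)⟩. Then for all integers i, j < 0, the elements s⁻ⁱ a sⁱ and s⁻ʲ a sʲ commute in G; that is, [a^{sⁱ}, a^{sʲ}] = 1 in G for all i, j < 0. -/

import Mathlib

/-!
Put `c n = sⁿ a s⁻ⁿ` and `xᵗ = t⁻¹ x t`; then `a^{sⁱ} = c (-i)`. Conjugating the relators by
`sⁿ`, which fixes `t`, shows that each `c n` is an involution commuting with `(c n)ᵗ`, and that
`c n = c (n + 1) · (c (n + 1))ᵗ`. By induction on `d`, `c (n + d)` commutes with both `c n` and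
`(c n)ᵗ`: the first by expanding `c n` and using the case `n + 1`, the second because
`t c (n + d + 1) t⁻¹ = t c (n + d) t⁻¹ · c (n + d + 1)` by the same relation and `c² = 1`.
-/

/-- The three generators `a`, `s`, `t`. -/
inductive Gen : Type
  | a | s | t

/-- The relators of the presentation
`⟨a, s, t | a² = 1, [a, t⁻¹at] = 1, [s,t] = 1, s⁻¹as = a·(t⁻¹at)⟩`,
where `[x,y] = x⁻¹y⁻¹xy`. -/
def rels : Set (FreeGroup Gen) :=
  { (FreeGroup.of Gen.a) ^ 2,
    (FreeGroup.of Gen.a)⁻¹ *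
        ((FreeGroup.of Gen.t)⁻¹ * FreeGroup.of Gen.a * FreeGroup.of Gen.t)⁻¹ *
        FreeGroup.of Gen.a *
        ((FreeGroup.of Gen.t)⁻¹ * FreeGroup.of Gen.a * FreeGroup.of Gen.t),
    (FreeGroup.of Gen.s)⁻¹ * (FreeGroup.of Gen.t)⁻¹ * FreeGroup.of Gen.s * FreeGroup.of Gen.t,
    ((FreeGroup.of Gen.s)⁻¹ * FreeGroup.of Gen.a * FreeGroup.of Gen.s)⁻¹ *
        (FreeGroup.of Gen.a *
          ((FreeGroup.of Gen.t)⁻¹ * FreeGroup.of Gen.a * FreeGroup.of Gen.t)) }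

/-- The group `G` of the paper. -/
abbrev G := PresentedGroup rels

def a : G := PresentedGroup.of Gen.a
def s : G := PresentedGroup.of Gen.s
def t : G := PresentedGroup.of Gen.t

section

variable {H : Type*} [Group H]

lemma commute_mul_mul_inv_iff {t x y : H} :
    Commute (t * x * t⁻¹) y ↔ Commute x (t⁻¹ * y * t) := by
  simpa [mul_assoc] using (Commute.conj_iff t⁻¹ (a := t * x * t⁻¹) (b := y)).symm

lemma mul_mul_inv_succ_eq {c : ℕ → H} {t : H} (hsq : ∀ n, c n * c n = 1)
    (hstep : ∀ n, c n = c (n + 1) * (t⁻¹ * c (n + 1) * t)) (n : ℕ) :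
    t * c (n + 1) * t⁻¹ = t * c n * t⁻¹ * c (n + 1) := by
  calc t * c (n + 1) * t⁻¹ = t * c (n + 1) * t⁻¹ * (c (n + 1) * c (n + 1)) := by
        rw [hsq, mul_one]
    _ = t * c n * t⁻¹ * c (n + 1) := by rw [hstep n]; group

lemma commute_add_and_commute_conj_add {c : ℕ → H} {t : H} (hsq : ∀ n, c n * c n = 1)
    (hcomm : ∀ n, Commute (c n) (t⁻¹ * c n * t))
    (hstep : ∀ n, c n = c (n + 1) * (t⁻¹ * c (n + 1) * t)) (d : ℕ) :
    ∀ n, Commute (c (n + d)) (c n) ∧ Commute (t * c (n + d) * t⁻¹) (c n) := by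
  induction d with
  | zero => exact fun n => ⟨.refl _, commute_mul_mul_inv_iff.mpr (hcomm n)⟩
  | succ d ih =>
    have hc : ∀ n, Commute (c (n + (d + 1))) (c n) := fun n => by
      obtain ⟨h, hconj⟩ := ih (n + 1)
      rw [Nat.add_right_comm] at h hconj
      rw [hstep n]
      exact h.mul_right (commute_mul_mul_inv_iff.mp hconj)
    refine fun n => ⟨hc n, ?_⟩
    rw [← add_assoc, mul_mul_inv_succ_eq hsq hstep]
    exact (ih n).2.mul_left (hc n)

theorem commute_of_eq_mul_conj_succ {c : ℕ → H} {t : H} (hsq : ∀ n, c n * c n = 1)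
    (hcomm : ∀ n, Commute (c n) (t⁻¹ * c n * t))
    (hstep : ∀ n, c n = c (n + 1) * (t⁻¹ * c (n + 1) * t)) (m n : ℕ) :
    Commute (c m) (c n) := by
  rcases le_total n m with h | h
  · obtain ⟨d, rfl⟩ := Nat.exists_eq_add_of_le h
    exact (commute_add_and_commute_conj_add hsq hcomm hstep d n).1
  · obtain ⟨d, rfl⟩ := Nat.exists_eq_add_of_le h
    exact (commute_add_and_commute_conj_add hsq hcomm hstep d m).1.symm

theorem commute_conj_pow_of_rels {a s t : H} (ha : a * a = 1) (hat : Commute a (t⁻¹ * a * t))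
    (hst : Commute s t) (hsa : s⁻¹ * a * s = a * (t⁻¹ * a * t)) (m n : ℕ) :
    Commute (MulAut.conj (s ^ m) a) (MulAut.conj (s ^ n) a) := by
  have hfix (k : ℕ) : MulAut.conj (s ^ k) t = t := (hst.pow_left k).mul_inv_cancel
  refine commute_of_eq_mul_conj_succ (c := fun k => MulAut.conj (s ^ k) a) (t := t)
    (fun k => ?_) (fun k => ?_) (fun k => ?_) m n
  · rw [← map_mul, ha, map_one]
  · simpa only [map_mul, map_inv, hfix] using hat.map (MulAut.conj (s ^ k))
  · have hshift : MulAut.conj (s ^ (k + 1)) (s⁻¹ * a * s) = MulAut.conj (s ^ k) a := by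
      rw [pow_succ, map_mul MulAut.conj, MulAut.mul_apply, MulAut.conj_apply s]
      congr 1
      group
    simpa only [hshift, map_mul, map_inv, hfix] using congrArg (MulAut.conj (s ^ (k + 1))) hsa

end

lemma a_mul_a : a * a = 1 := by
  have h := PresentedGroup.one_of_mem (rels := rels) (Set.mem_insert _ _)
  rw [map_pow, pow_two] at h
  exact h

-- The paper's commutator `x⁻¹y⁻¹xy` is Mathlib's `⁅x⁻¹, y⁻¹⁆`.
lemma commute_a_conj_t : Commute a (t⁻¹ * a * t) :=
  Commute.inv_inv_iff.mp <| commutatorElement_eq_one_iff_commute.mp <|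
    PresentedGroup.one_of_mem (rels := rels) (by simp [rels])

lemma commute_s_t : Commute s t :=
  Commute.inv_inv_iff.mp <| commutatorElement_eq_one_iff_commute.mp <|
    PresentedGroup.one_of_mem (rels := rels) (by simp [rels])

lemma inv_s_mul_a_mul_s : s⁻¹ * a * s = a * (t⁻¹ * a * t) :=
  PresentedGroup.mk_eq_mk_of_inv_mul_mem (rels := rels) (by simp [rels])

/-- In `G`, the conjugates `a^{sⁱ} = s⁻ⁱ a sⁱ` and `a^{sʲ} = s⁻ʲ a sʲ` commute for all
integers `i, j < 0`. -/
theorem conj_a_s_commute (i j : ℤ) (hi : i < 0) (hj : j < 0) :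
    Commute ((s ^ i)⁻¹ * a * s ^ i) ((s ^ j)⁻¹ * a * s ^ j) := by
  obtain ⟨m, rfl⟩ := Int.exists_eq_neg_ofNat hi.le
  obtain ⟨n, rfl⟩ := Int.exists_eq_neg_ofNat hj.le
  simpa only [zpow_neg, zpow_natCast, inv_inv, MulAut.conj_apply] using
    commute_conj_pow_of_rels a_mul_a commute_a_conj_t commute_s_t inv_s_mul_a_mul_s m n
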